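/- arXiv:1506.08960 — 4 statements merged into one kernel-verified Lean document; each statement's English description precedes it below -/
import Mathlib

section
/- With the notation above, suppose (ξ_n) is a sequence in C(Ω̄ × S^{d-1}, ℝ_+) and x ∈ Ω̄ is such that the vector ξ_n(x) := (ξ_n(x, v_1(x)),…, ξ_n(x, v_N(x))) converges to (ξ(x, v_1(x)),…, ξ(x, v_N(x))) in ℝ^N. Assume additionally that A_x^y is nonempty and that the minimum in Φ_{ξ_n}(x,y) and Φ_ξ(x,y) can be taken over decompositions Y with |Y| ≤ C for a uniform constant C (controlled decomposition hypothesis). Then Φ_{ξ_n}(x,y) → Φ_ξ(x,y) for every y ∈ ℝ^d. -/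
open scoped BigOperators
open Filter

/-- under the controlled decomposition hypothesis, if the cost vectors
`ξ_n(x)` converge to `ξ(x)` then `Φ_{ξ_n}(x,y) → Φ_ξ(x,y)` for every `y`. -/
theorem stmt_3 (d N : ℕ)
    (Ω : Set (EuclideanSpace ℝ (Fin d))) (hΩ : Bornology.IsBounded Ω)
    (v : Fin N → EuclideanSpace ℝ (Fin d) → EuclideanSpace ℝ (Fin d))
    (hv_cont : ∀ k, ContinuousOn (v k) (closure Ω))
    (hv_unit : ∀ k, ∀ x ∈ closure Ω, ‖v k x‖ = 1)
    -- controlled decomposition hypothesis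
    (hctrl : ∃ C : ℝ, 0 < C ∧ ∀ (x z : EuclideanSpace ℝ (Fin d)), ‖z‖ = 1 →
      ∀ ξ' : Fin N → ℝ, (∀ k, 0 ≤ ξ' k) →
        ∃ Z : Fin N → ℝ, (∀ k, 0 ≤ Z k) ∧ (∑ k, Z k • v k x = z) ∧
          (∀ Z' : Fin N → ℝ, (∀ k, 0 ≤ Z' k) → ∑ k, Z' k • v k x = z →
            ∑ k, Z k * ξ' k ≤ ∑ k, Z' k * ξ' k) ∧ (∑ k, Z k ≤ C))
    (ξseq : ℕ → EuclideanSpace ℝ (Fin d) → EuclideanSpace ℝ (Fin d) → ℝ)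
    (hξseq_cont : ∀ n, ContinuousOn
      (fun p : EuclideanSpace ℝ (Fin d) × EuclideanSpace ℝ (Fin d) => ξseq n p.1 p.2)
      ((closure Ω) ×ˢ Metric.sphere (0 : EuclideanSpace ℝ (Fin d)) 1))
    (hξseq_nonneg : ∀ n, ∀ x ∈ closure Ω,
      ∀ w ∈ Metric.sphere (0 : EuclideanSpace ℝ (Fin d)) 1, 0 ≤ ξseq n x w)
    (ξ : EuclideanSpace ℝ (Fin d) → EuclideanSpace ℝ (Fin d) → ℝ)
    (x : EuclideanSpace ℝ (Fin d)) (hx : x ∈ closure Ω)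
    (hconv : ∀ k, Tendsto (fun n => ξseq n x (v k x)) atTop (nhds (ξ x (v k x))))
    (hA : ∀ y : EuclideanSpace ℝ (Fin d), ∃ Y : Fin N → ℝ,
      (∀ k, 0 ≤ Y k) ∧ ∑ k, Y k • v k x = y) :
    ∀ y : EuclideanSpace ℝ (Fin d),
      Tendsto (fun n => sInf {c : ℝ | ∃ Y : Fin N → ℝ, (∀ k, 0 ≤ Y k) ∧
          (∑ k, Y k • v k x = y) ∧ c = ∑ k, Y k * ξseq n x (v k x)}) atTop
        (nhds (sInf {c : ℝ | ∃ Y : Fin N → ℝ, (∀ k, 0 ≤ Y k) ∧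
          (∑ k, Y k • v k x = y) ∧ c = ∑ k, Y k * ξ x (v k x)})) := by
  obtain ⟨C, hC, hctrl⟩ := hctrl
  intro y
  -- sphere membership of v k x
  have hvs : ∀ k, v k x ∈ Metric.sphere (0 : EuclideanSpace ℝ (Fin d)) 1 := by
    intro k
    simp [mem_sphere_iff_norm, hv_unit k x hx]
  have hξn : ∀ n k, 0 ≤ ξseq n x (v k x) := fun n k =>
    hξseq_nonneg n x hx (v k x) (hvs k)
  have hxiInf : ∀ k, 0 ≤ ξ x (v k x) := fun k =>
    le_of_tendsto_of_tendsto' tendsto_const_nhds (hconv k) (fun n => hξn n k)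
  -- generic set
  set S : (Fin N → ℝ) → Set ℝ := fun A => {c : ℝ | ∃ Y : Fin N → ℝ, (∀ k, 0 ≤ Y k) ∧
      (∑ k, Y k • v k x = y) ∧ c = ∑ k, Y k * A k} with hSdef
  -- lower bound 0
  have hlb : ∀ A : Fin N → ℝ, (∀ k, 0 ≤ A k) → ∀ c ∈ S A, (0:ℝ) ≤ c := by
    rintro A hA0 c ⟨Y, hY0, -, rfl⟩
    exact Finset.sum_nonneg fun k _ => mul_nonneg (hY0 k) (hA0 k)
  have hbdd : ∀ A : Fin N → ℝ, (∀ k, 0 ≤ A k) → BddBelow (S A) := by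
    intro A hA0
    exact ⟨0, fun c hc => hlb A hA0 c hc⟩
  have hne : ∀ A : Fin N → ℝ, (S A).Nonempty := by
    intro A
    obtain ⟨Y, hY0, hYd⟩ := hA y
    exact ⟨∑ k, Y k * A k, Y, hY0, hYd, rfl⟩
  -- controlled minimizer for every nonnegative cost vector
  have hmin : ∀ A : Fin N → ℝ, (∀ k, 0 ≤ A k) → ∃ Y : Fin N → ℝ, (∀ k, 0 ≤ Y k) ∧
      (∑ k, Y k • v k x = y) ∧ (∑ k, Y k ≤ C * ‖y‖) ∧
      ∀ Y' : Fin N → ℝ, (∀ k, 0 ≤ Y' k) → ∑ k, Y' k • v k x = y →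
        ∑ k, Y k * A k ≤ ∑ k, Y' k * A k := by
    intro A hA0
    by_cases hy : y = 0
    · refine ⟨0, fun k => le_rfl, ?_, ?_, ?_⟩
      · simp [hy]
      · simp [hy, mul_nonneg hC.le (norm_nonneg y)]
      · intro Y' hY'0 _
        simp only [Pi.zero_apply, zero_mul, Finset.sum_const_zero]
        exact Finset.sum_nonneg fun k _ => mul_nonneg (hY'0 k) (hA0 k)
    · have hyn : (0:ℝ) < ‖y‖ := norm_pos_iff.mpr hy
      have hz : ‖(‖y‖⁻¹ • y : EuclideanSpace ℝ (Fin d))‖ = 1 := by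
        rw [norm_smul, norm_inv, norm_norm, inv_mul_cancel₀ hyn.ne']
      obtain ⟨Z, hZ0, hZd, hZmin, hZC⟩ := hctrl x (‖y‖⁻¹ • y) hz A hA0
      refine ⟨fun k => ‖y‖ * Z k, fun k => mul_nonneg hyn.le (hZ0 k), ?_, ?_, ?_⟩
      · calc ∑ k, (‖y‖ * Z k) • v k x = ‖y‖ • ∑ k, Z k • v k x := by
              rw [Finset.smul_sum]; simp [smul_smul]
          _ = y := by rw [hZd, smul_smul, mul_inv_cancel₀ hyn.ne', one_smul]
      · rw [← Finset.mul_sum]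
        calc ‖y‖ * ∑ k, Z k ≤ ‖y‖ * C := by
              exact mul_le_mul_of_nonneg_left hZC hyn.le
          _ = C * ‖y‖ := mul_comm _ _
      · intro Y' hY'0 hY'd
        have hZ'd : ∑ k, (‖y‖⁻¹ * Y' k) • v k x = ‖y‖⁻¹ • y := by
          rw [← hY'd, Finset.smul_sum]; simp [smul_smul]
        have := hZmin (fun k => ‖y‖⁻¹ * Y' k)
          (fun k => mul_nonneg (inv_nonneg.mpr hyn.le) (hY'0 k)) hZ'd
        have h2 := mul_le_mul_of_nonneg_left this hyn.le
        calc ∑ k, (‖y‖ * Z k) * A k = ‖y‖ * ∑ k, Z k * A k := by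
              rw [Finset.mul_sum]
              exact Finset.sum_congr rfl fun k _ => mul_assoc _ _ _
          _ ≤ ‖y‖ * ∑ k, (‖y‖⁻¹ * Y' k) * A k := h2
          _ = ∑ k, Y' k * A k := by
              rw [Finset.mul_sum]
              refine Finset.sum_congr rfl fun k _ => ?_
              field_simp
  -- key Lipschitz-type estimate
  have key : ∀ A B : Fin N → ℝ, (∀ k, 0 ≤ A k) → (∀ k, 0 ≤ B k) →
      sInf (S A) ≤ sInf (S B) + C * ‖y‖ * ∑ k, |A k - B k| := by
    intro A B hA0 hB0
    obtain ⟨Y, hY0, hYd, hYC, hYmin⟩ := hmin B hB0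
    have hval : sInf (S B) = ∑ k, Y k * B k := by
      refine le_antisymm (csInf_le (hbdd B hB0) ⟨Y, hY0, hYd, rfl⟩) ?_
      refine le_csInf (hne B) ?_
      rintro c ⟨Y', hY'0, hY'd, rfl⟩
      exact hYmin Y' hY'0 hY'd
    have hmem : (∑ k, Y k * A k) ∈ S A := ⟨Y, hY0, hYd, rfl⟩
    have h1 : sInf (S A) ≤ ∑ k, Y k * A k := csInf_le (hbdd A hA0) hmem
    have hYk : ∀ k, Y k ≤ C * ‖y‖ := by
      intro k
      calc Y k ≤ ∑ j, Y j := Finset.single_le_sum (fun j _ => hY0 j) (Finset.mem_univ k)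
        _ ≤ C * ‖y‖ := hYC
    have h2 : ∑ k, Y k * A k ≤ ∑ k, Y k * B k + C * ‖y‖ * ∑ k, |A k - B k| := by
      have : ∑ k, Y k * A k - ∑ k, Y k * B k = ∑ k, Y k * (A k - B k) := by
        rw [← Finset.sum_sub_distrib]
        exact Finset.sum_congr rfl fun k _ => by ring
      rw [← sub_le_iff_le_add', this] at *
      calc ∑ k, Y k * (A k - B k) ≤ ∑ k, (C * ‖y‖) * |A k - B k| := by
            refine Finset.sum_le_sum fun k _ => ?_
            calc Y k * (A k - B k) ≤ Y k * |A k - B k| :=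
                  mul_le_mul_of_nonneg_left (le_abs_self _) (hY0 k)
              _ ≤ (C * ‖y‖) * |A k - B k| :=
                  mul_le_mul_of_nonneg_right (hYk k) (abs_nonneg _)
        _ = C * ‖y‖ * ∑ k, |A k - B k| := by rw [Finset.mul_sum]
    rw [hval]
    exact h1.trans h2
  -- error sequence
  set e : ℕ → ℝ := fun n => C * ‖y‖ * ∑ k, |ξseq n x (v k x) - ξ x (v k x)| with he
  have he0 : Tendsto e atTop (nhds 0) := by
    have hsum : Tendsto (fun n => ∑ k : Fin N, |ξseq n x (v k x) - ξ x (v k x)|) atTop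
        (nhds (∑ k : Fin N, |ξ x (v k x) - ξ x (v k x)|)) :=
      tendsto_finset_sum _ fun k _ =>
        ((hconv k).sub (tendsto_const_nhds (x := ξ x (v k x)))).abs
    simp only [sub_self, abs_zero, Finset.sum_const_zero] at hsum
    have h2 := hsum.const_mul (C * ‖y‖)
    simpa [he] using h2
  set a : ℝ := sInf (S (fun k => ξ x (v k x))) with ha
  have hub : ∀ n, sInf (S (fun k => ξseq n x (v k x))) ≤ a + e n := fun n =>
    key _ _ (fun k => hξn n k) hxiInf
  have hlb2 : ∀ n, a - e n ≤ sInf (S (fun k => ξseq n x (v k x))) := by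
    intro n
    have := key (fun k => ξ x (v k x)) (fun k => ξseq n x (v k x)) hxiInf (fun k => hξn n k)
    have habs : ∑ k, |ξ x (v k x) - ξseq n x (v k x)| =
        ∑ k, |ξseq n x (v k x) - ξ x (v k x)| := by
      exact Finset.sum_congr rfl fun k _ => abs_sub_comm _ _
    rw [habs] at this
    have hen : e n = C * ‖y‖ * ∑ k, |ξseq n x (v k x) - ξ x (v k x)| := rfl
    linarith
  have hga : Tendsto (fun n => a - e n) atTop (nhds a) := by
    simpa using tendsto_const_nhds.sub he0
  have hha : Tendsto (fun n => a + e n) atTop (nhds a) := by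
    simpa using tendsto_const_nhds.add he0
  exact tendsto_of_tendsto_of_tendsto_of_le_of_le hga hha hlb2 hub
end

section
/- Let Ω̄ ⊂ ℝ^d be compact and connected, and v_1,…,v_N : Ω̄ → S^{d-1} continuous. Assume the controlled decomposition hypothesis: there exists C > 0 such that for every x ∈ Ω̄, z ∈ S^{d-1}, and ξ ∈ ℝ_+^N, there is a minimizer Z̄ of Z ↦ Z·ξ over {Z ∈ ℝ_+^N : Σ_k Z_k v_k(x) = z} with |Z̄| ≤ C. Then for every subset I ⊆ {1,…,N}, exactly one of the following holds: (a) 0 ∈ Conv({v_i(x)}_{i∈I}) for every x ∈ Ω̄, or (b) 0 ∉ Conv({v_i(x)}_{i∈I}) for every x ∈ Ω̄. -/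
/-!
If `0 = ∑ wᵢ vᵢ(x)` with `w` in the standard simplex, then at a nearby point `y` the defect
`h = ∑ wᵢ vᵢ(y)` is small. The controlled decomposition hypothesis, applied with a cost that
vanishes exactly on the support of `w`, writes `h = ∑ Zᵢ vᵢ(y)` with `Z ≥ 0` supported where `w`
is and `∑ Zᵢ ≤ C ‖h‖`; hence `w - Z` is a nonnegative nonzero combination of the `vᵢ(y)` that
vanishes. So `{x ∈ Ω̄ | 0 ∈ Conv {vᵢ(x)}}` is relatively open. Its complement is relatively open
too, since the families whose convex hull contains `0` form a closed set: the projection of a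
closed set along the compact simplex. Connectedness of `Ω̄` concludes.
-/

open Filter Topology Set

section

variable {ι E : Type*} [Fintype ι] [NormedAddCommGroup E] [NormedSpace ℝ E]

theorem mem_convexHull_image_iff_exists_stdSimplex {u : ι → E} {I : Finset ι} {x : E} :
    x ∈ convexHull ℝ (u '' I) ↔
      ∃ μ ∈ stdSimplex ℝ ι, (∀ i ∉ I, μ i = 0) ∧ ∑ i, μ i • u i = x := by
  classical
  constructor
  · refine fun hx => convexHull_min (t := {y | ∃ μ ∈ stdSimplex ℝ ι, (∀ i ∉ I, μ i = 0) ∧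
      ∑ i, μ i • u i = y}) ?_ ?_ hx
    · rintro _ ⟨i, hi, rfl⟩
      refine ⟨Pi.single i 1, single_mem_stdSimplex ℝ i, fun j hj => ?_, by simp [Pi.single_apply]⟩
      exact Pi.single_eq_of_ne (by rintro rfl; exact hj hi) 1
    · rintro _ ⟨μ, hμ, hμI, rfl⟩ _ ⟨μ', hμ', hμ'I, rfl⟩ a b ha hb hab
      refine ⟨a • μ + b • μ', convex_stdSimplex ℝ ι hμ hμ' ha hb hab,
        fun i hi => by simp [hμI i hi, hμ'I i hi], ?_⟩
      simp [add_smul, mul_smul, Finset.sum_add_distrib, Finset.smul_sum]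
  · rintro ⟨μ, ⟨hμ0, hμ1⟩, hμI, rfl⟩
    have hI1 : ∑ i ∈ I, μ i = 1 :=
      (Finset.sum_subset I.subset_univ fun i _ hi => hμI i hi).trans hμ1
    rw [← Finset.sum_subset I.subset_univ fun i _ hi => by simp [hμI i hi],
      ← Finset.centerMass_eq_of_sum_1 _ _ hI1]
    exact I.centerMass_mem_convexHull (fun i _ => hμ0 i) (by rw [hI1]; exact one_pos)
      fun i hi => mem_image_of_mem u hi

theorem zero_mem_convexHull_image_of_sum_pos {u : ι → E} {I : Finset ι} {μ : ι → ℝ}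
    (hμ : ∀ i, 0 ≤ μ i) (hμI : ∀ i ∉ I, μ i = 0) (hpos : 0 < ∑ i, μ i)
    (hzero : ∑ i, μ i • u i = 0) : (0 : E) ∈ convexHull ℝ (u '' I) := by
  refine mem_convexHull_image_iff_exists_stdSimplex.2
    ⟨(∑ i, μ i)⁻¹ • μ, ⟨fun i => ?_, ?_⟩, fun i hi => by simp [hμI i hi], ?_⟩
  · exact mul_nonneg (inv_nonneg.2 hpos.le) (hμ i)
  · simp [← Finset.mul_sum, hpos.ne']
  · simp [mul_smul, ← Finset.smul_sum, hzero]

theorem isClosed_setOf_mem_convexHull_image (I : Finset ι) (x : E) :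
    IsClosed {u : ι → E | x ∈ convexHull ℝ (u '' I)} := by
  have hproj : {u : ι → E | x ∈ convexHull ℝ (u '' I)} = Prod.snd ''
      {p : stdSimplex ℝ ι × (ι → E) | (∀ i ∉ I, p.1.1 i = 0) ∧
        ∑ i, p.1.1 i • p.2 i = x} := by
    ext u
    simp [mem_convexHull_image_iff_exists_stdSimplex, and_left_comm]
  rw [hproj, ofPred_and]
  have hcont (i : ι) : Continuous fun p : stdSimplex ℝ ι × (ι → E) => p.1.1 i :=
    (continuous_apply i).comp (continuous_subtype_val.comp continuous_fst)
  refine isClosedMap_snd_of_compactSpace _ (IsClosed.inter ?_ (isClosed_eq ?_ continuous_const))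
  · simp only [ofPred_forall]
    exact isClosed_iInter fun i => isClosed_iInter fun _ => isClosed_eq (hcont i) continuous_const
  · exact continuous_finsetSum _ fun i _ =>
      (hcont i).smul ((continuous_apply i).comp continuous_snd)

-- For `Z ≥ 0`, `∑ k, Z k` is the ℓ¹ norm, standing for the paper's `|Z̄|`.
def HasControlledDecomposition (u : ι → E) (C : ℝ) : Prop :=
  ∀ z : E, ‖z‖ = 1 → ∀ ξ : ι → ℝ, (∀ k, 0 ≤ ξ k) →
    ∃ Z : ι → ℝ, (∀ k, 0 ≤ Z k) ∧ (∑ k, Z k • u k = z) ∧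
      (∀ Z' : ι → ℝ, (∀ k, 0 ≤ Z' k) → ∑ k, Z' k • u k = z →
        ∑ k, Z k * ξ k ≤ ∑ k, Z' k * ξ k) ∧ (∑ k, Z k ≤ C)

namespace HasControlledDecomposition

variable {u : ι → E} {C : ℝ}

theorem exists_decomposition_of_norm_eq_one (hu : HasControlledDecomposition u C) {z : E}
    (hz : ‖z‖ = 1) {w : ι → ℝ} (hw : ∀ k, 0 ≤ w k) (hwz : ∑ k, w k • u k = z) :
    ∃ Z : ι → ℝ, (∀ k, 0 ≤ Z k) ∧ (∀ k, w k = 0 → Z k = 0) ∧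
      ∑ k, Z k • u k = z ∧ ∑ k, Z k ≤ C := by
  classical
  let ξ : ι → ℝ := fun k => if w k = 0 then 1 else 0
  have hξ : ∀ k, 0 ≤ ξ k := fun k => by dsimp only [ξ]; split_ifs <;> norm_num
  obtain ⟨Z, hZ0, hZz, hZmin, hZC⟩ := hu z hz ξ hξ
  -- `w` is an admissible competitor of cost zero
  have hcost : ∑ k, Z k * ξ k = 0 := by
    refine le_antisymm ((hZmin w hw hwz).trans_eq (Finset.sum_eq_zero fun k _ => ?_))
      (Finset.sum_nonneg fun k _ => mul_nonneg (hZ0 k) (hξ k))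
    by_cases hk : w k = 0 <;> simp [ξ, hk]
  refine ⟨Z, hZ0, fun k hk => ?_, hZz, hZC⟩
  have := (Finset.sum_eq_zero_iff_of_nonneg fun j _ => mul_nonneg (hZ0 j) (hξ j)).1 hcost k
    (Finset.mem_univ k)
  simpa [ξ, hk] using this

theorem exists_decomposition (hu : HasControlledDecomposition u C) {w : ι → ℝ}
    (hw : ∀ k, 0 ≤ w k) :
    ∃ Z : ι → ℝ, (∀ k, 0 ≤ Z k) ∧ (∀ k, w k = 0 → Z k = 0) ∧
      ∑ k, Z k • u k = ∑ k, w k • u k ∧ ∑ k, Z k ≤ C * ‖∑ k, w k • u k‖ := by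
  set h := ∑ k, w k • u k with hh
  rcases eq_or_ne h 0 with h0 | h0
  · exact ⟨0, fun _ => le_rfl, fun _ _ => rfl, by simp [h0], by simp [h0]⟩
  have hn : 0 < ‖h‖ := norm_pos_iff.2 h0
  have hunit : ‖‖h‖⁻¹ • h‖ = 1 := by
    rw [norm_smul, norm_inv, norm_norm, inv_mul_cancel₀ hn.ne']
  obtain ⟨Z, hZ0, hZw, hZh, hZC⟩ := hu.exists_decomposition_of_norm_eq_one hunit
    (w := ‖h‖⁻¹ • w) (fun k => mul_nonneg (inv_nonneg.2 hn.le) (hw k))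
    (by simp [mul_smul, ← Finset.smul_sum, hh])
  refine ⟨‖h‖ • Z, fun k => mul_nonneg hn.le (hZ0 k), fun k hk => by simp [hZw k (by simp [hk])],
    ?_, ?_⟩
  · simp [mul_smul, ← Finset.smul_sum, hZh, hn.ne']
  · simpa [← Finset.mul_sum, mul_comm C] using mul_le_mul_of_nonneg_left hZC hn.le

theorem zero_mem_convexHull_image (hu : HasControlledDecomposition u C) {I : Finset ι}
    {w : ι → ℝ} (hw : w ∈ stdSimplex ℝ ι) (hwI : ∀ k ∉ I, w k = 0)
    (hsmall : ∀ k, w k ≠ 0 → C * ‖∑ i, w i • u i‖ < w k) :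
    (0 : E) ∈ convexHull ℝ (u '' I) := by
  obtain ⟨Z, hZ0, hZw, hZsum, hZC⟩ := hu.exists_decomposition hw.1
  have hZlt : ∀ k, w k ≠ 0 → Z k < w k := fun k hk =>
    ((Finset.single_le_sum (fun j _ => hZ0 j) (Finset.mem_univ k)).trans hZC).trans_lt
      (hsmall k hk)
  have hμ : ∀ k, 0 ≤ w k - Z k := fun k => by
    by_cases hk : w k = 0
    · simp [hk, hZw k hk]
    · exact (sub_pos.2 (hZlt k hk)).le
  obtain ⟨k, hk⟩ : ∃ k, w k ≠ 0 := by
    by_contra! h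
    simpa [h] using hw.2
  refine zero_mem_convexHull_image_of_sum_pos (μ := w - Z) hμ
    (fun i hi => by simp [hwI i hi, hZw i (hwI i hi)])
    (Finset.sum_pos' (fun i _ => hμ i) ⟨k, Finset.mem_univ k, sub_pos.2 (hZlt k hk)⟩) ?_
  simp [sub_smul, Finset.sum_sub_distrib, hZsum]

end HasControlledDecomposition

end

section

variable {ι X E : Type*} [Fintype ι] [TopologicalSpace X] [NormedAddCommGroup E]
  [NormedSpace ℝ E] {v : ι → X → E} {K : Set X} {x : X} {I : Finset ι}

theorem eventually_zero_mem_convexHull_image {C : ℝ}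
    (hv : ∀ k, ContinuousWithinAt (v k) K x)
    (hctrl : ∀ y ∈ K, HasControlledDecomposition (fun k => v k y) C)
    (hx : (0 : E) ∈ convexHull ℝ ((fun k => v k x) '' I)) :
    ∀ᶠ y in 𝓝[K] x, (0 : E) ∈ convexHull ℝ ((fun k => v k y) '' I) := by
  obtain ⟨w, hw, hwI, hwx⟩ := mem_convexHull_image_iff_exists_stdSimplex.1 hx
  have hlim : Tendsto (fun y => C * ‖∑ k, w k • v k y‖) (𝓝[K] x) (𝓝 0) := by
    have hsum : ContinuousWithinAt (fun y => ∑ k, w k • v k y) K x :=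
      tendsto_finsetSum _ fun k _ => (hv k).const_smul (w k)
    simpa [hwx] using (hsum.norm.const_mul C).tendsto
  have hsmall : ∀ᶠ y in 𝓝[K] x, ∀ k, w k ≠ 0 → C * ‖∑ i, w i • v i y‖ < w k :=
    eventually_all.2 fun k => by
      rcases (hw.1 k).eq_or_lt with hk | hk
      · exact .of_forall fun _ hk' => absurd hk.symm hk'
      · exact (hlim.eventually_lt_const hk).mono fun _ hy _ => hy
  filter_upwards [hsmall, self_mem_nhdsWithin] with y hy hyK
  exact (hctrl y hyK).zero_mem_convexHull_image hw hwI hy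

theorem eventually_zero_notMem_convexHull_image (hv : ∀ k, ContinuousWithinAt (v k) K x)
    (hx : (0 : E) ∉ convexHull ℝ ((fun k => v k x) '' I)) :
    ∀ᶠ y in 𝓝[K] x, (0 : E) ∉ convexHull ℝ ((fun k => v k y) '' I) :=
  (continuousWithinAt_pi.2 hv).eventually_mem
    ((isClosed_setOf_mem_convexHull_image I 0).isOpen_compl.mem_nhds hx)

theorem eventually_zero_mem_convexHull_image_iff {C : ℝ}
    (hv : ∀ k, ContinuousWithinAt (v k) K x)
    (hctrl : ∀ y ∈ K, HasControlledDecomposition (fun k => v k y) C) :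
    ∀ᶠ y in 𝓝[K] x, ((0 : E) ∈ convexHull ℝ ((fun k => v k x) '' I) ↔
      (0 : E) ∈ convexHull ℝ ((fun k => v k y) '' I)) := by
  by_cases hx : (0 : E) ∈ convexHull ℝ ((fun k => v k x) '' I)
  · filter_upwards [eventually_zero_mem_convexHull_image hv hctrl hx] with y hy
    exact iff_of_true hx hy
  · filter_upwards [eventually_zero_notMem_convexHull_image hv hx] with y hy
    exact iff_of_false hx hy

end

theorem IsConnected.xor_forall_of_eventually_iff {X : Type*} [TopologicalSpace X] {K : Set X}
    (hK : IsConnected K) {p : X → Prop} (hp : ∀ x ∈ K, ∀ᶠ y in 𝓝[K] x, (p x ↔ p y)) :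
    Xor (∀ x ∈ K, p x) (∀ x ∈ K, ¬p x) := by
  have hconst : ∀ x ∈ K, ∀ y ∈ K, p x ↔ p y := fun x hx y hy =>
    hK.isPreconnected.induction₂ (fun x y => p x ↔ p y) hp (fun _ _ _ _ _ _ => Iff.trans)
      (fun _ _ _ _ => Iff.symm) hx hy
  obtain ⟨x₀, hx₀⟩ := hK.nonempty
  by_cases h : p x₀
  · exact Or.inl ⟨fun x hx => (hconst x₀ hx₀ x hx).1 h, fun hn => hn x₀ hx₀ h⟩
  · exact Or.inr ⟨fun x hx hpx => h ((hconst x₀ hx₀ x hx).2 hpx), fun hp => h (hp x₀ hx₀)⟩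

theorem stmt_4_general (d N : ℕ)
    (K : Set (EuclideanSpace ℝ (Fin d))) (hKconn : IsConnected K)
    (v : Fin N → EuclideanSpace ℝ (Fin d) → EuclideanSpace ℝ (Fin d))
    (hv_cont : ∀ k, ContinuousOn (v k) K)
    -- controlled decomposition hypothesis
    (hctrl : ∃ C : ℝ, 0 < C ∧ ∀ x ∈ K, ∀ z : EuclideanSpace ℝ (Fin d), ‖z‖ = 1 →
      ∀ ξ' : Fin N → ℝ, (∀ k, 0 ≤ ξ' k) →
        ∃ Z : Fin N → ℝ, (∀ k, 0 ≤ Z k) ∧ (∑ k, Z k • v k x = z) ∧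
          (∀ Z' : Fin N → ℝ, (∀ k, 0 ≤ Z' k) → ∑ k, Z' k • v k x = z →
            ∑ k, Z k * ξ' k ≤ ∑ k, Z' k * ξ' k) ∧ (∑ k, Z k ≤ C)) :
    ∀ I : Finset (Fin N),
      Xor' (∀ x ∈ K, (0 : EuclideanSpace ℝ (Fin d)) ∈
              convexHull ℝ {w | ∃ i ∈ I, w = v i x})
           (∀ x ∈ K, (0 : EuclideanSpace ℝ (Fin d)) ∉
              convexHull ℝ {w | ∃ i ∈ I, w = v i x}) := by
  obtain ⟨C, -, hctrl⟩ := hctrl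
  intro I
  have himage : ∀ x, {w | ∃ i ∈ I, w = v i x} = (fun i => v i x) '' I := fun x => by
    ext w
    simp [eq_comm]
  simp only [himage]
  exact hKconn.xor_forall_of_eventually_iff fun x hx =>
    eventually_zero_mem_convexHull_image_iff (fun k => hv_cont k x hx) hctrl

/-- the 'all or nothing' dichotomy. For every subset `I` of directions,
either `0` lies in the convex hull of `{v_i(x)}_{i∈I}` for every `x ∈ Ω̄`, or for no
`x ∈ Ω̄`. -/
theorem stmt_4 (d N : ℕ)
    (K : Set (EuclideanSpace ℝ (Fin d))) (hKcomp : IsCompact K) (hKconn : IsConnected K)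
    (v : Fin N → EuclideanSpace ℝ (Fin d) → EuclideanSpace ℝ (Fin d))
    (hv_cont : ∀ k, ContinuousOn (v k) K)
    (hv_unit : ∀ k, ∀ x ∈ K, ‖v k x‖ = 1)
    -- controlled decomposition hypothesis
    (hctrl : ∃ C : ℝ, 0 < C ∧ ∀ x ∈ K, ∀ z : EuclideanSpace ℝ (Fin d), ‖z‖ = 1 →
      ∀ ξ' : Fin N → ℝ, (∀ k, 0 ≤ ξ' k) →
        ∃ Z : Fin N → ℝ, (∀ k, 0 ≤ Z k) ∧ (∑ k, Z k • v k x = z) ∧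
          (∀ Z' : Fin N → ℝ, (∀ k, 0 ≤ Z' k) → ∑ k, Z' k • v k x = z →
            ∑ k, Z k * ξ' k ≤ ∑ k, Z' k * ξ' k) ∧ (∑ k, Z k ≤ C)) :
    ∀ I : Finset (Fin N),
      Xor' (∀ x ∈ K, (0 : EuclideanSpace ℝ (Fin d)) ∈
              convexHull ℝ {w | ∃ i ∈ I, w = v i x})
           (∀ x ∈ K, (0 : EuclideanSpace ℝ (Fin d)) ∉
              convexHull ℝ {w | ∃ i ∈ I, w = v i x}) :=
  stmt_4_general d N K hKconn v hv_cont hctrl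
end

section
/- Reduction to controlled decompositions (Lemma 'pbred', pointwise version): let v_1,…,v_N : Ω̄ → S^{d-1} be continuous on a compact connected Ω̄ satisfying the controlled decomposition hypothesis, and let δ ∈ (0,1) be the constant from the dichotomy lemma. Let x ∈ Ω̄, z ∈ ℝ^d, and ρ ∈ ℝ_+^N with Σ_k ρ_k v_k(x) = z. Then there exists ρ̄ ∈ ℝ_+^N with ρ̄_k ≤ ρ_k for all k, Σ_k ρ̄_k v_k(x) = z, and Σ_k ρ̄_k ≤ (1/δ)|z|. -/
/-!
A subdecomposition `σ ≤ ρ` of `z` with minimal support `I` has `0 ∉ conv {v_i(x) : i ∈ I}`: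
otherwise subtracting a multiple of a null convex combination would shrink the support.
Controlled decompositions give a uniform gap: whenever `0 ∉ conv {v_i(y) : i ∈ I}`, every point
of this hull has norm `≥ 1/C`. Indeed, for the point `p` of the hull closest to `0`, the optimal
decomposition of `p / ‖p‖` (with costs vanishing exactly on the directions used by `p`) only uses
directions with `⟪v_k(y), p / ‖p‖⟫ = ‖p‖`, so `1 = ‖p‖ Σ Z_k ≤ ‖p‖ C`. With continuity of the
`v_k`, the gap makes `0 ∈ conv {v_i(y) : i ∈ I}` locally constant in `y`, hence constant on the
connected set `K`. So the dichotomy constant applies to `I`, and `δ Σ σ_k ≤ ⟪z, u⟫ ≤ ‖z‖`.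
-/

open Finset Topology
open scoped RealInnerProductSpace

section Algebraic

variable {𝕜 E ι : Type*} [Field 𝕜] [LinearOrder 𝕜] [IsStrictOrderedRing 𝕜]
  [AddCommGroup E] [Module 𝕜 E] [Fintype ι]

theorem Finset.mem_convexHull_image_iff {w : ι → E} {I : Finset ι} {a : E} :
    a ∈ convexHull 𝕜 (w '' I) ↔ ∃ μ : ι → 𝕜, (∀ k, 0 ≤ μ k) ∧ (∀ k ∉ I, μ k = 0) ∧
      ∑ k, μ k = 1 ∧ ∑ k, μ k • w k = a := by
  classical
  constructor
  · refine fun ha => (convexHull_min (t := {b | ∃ μ : ι → 𝕜, (∀ k, 0 ≤ μ k) ∧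
      (∀ k ∉ I, μ k = 0) ∧ ∑ k, μ k = 1 ∧ ∑ k, μ k • w k = b}) ?_ ?_ ha :)
    · rintro _ ⟨i, hi, rfl⟩
      refine ⟨Pi.single i 1, fun k => ?_, fun k hk => ?_, by simp, by simp [Pi.single_apply]⟩
      · by_cases h : k = i <;> simp [h]
      · simp [show k ≠ i from fun h => hk (h ▸ hi)]
    · rintro _ ⟨μ, hμ0, hμI, hμ1, rfl⟩ _ ⟨ν, hν0, hνI, hν1, rfl⟩ s t hs ht hst
      refine ⟨s • μ + t • ν, fun k => ?_, fun k hk => ?_, ?_, ?_⟩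
      · simpa using add_nonneg (mul_nonneg hs (hμ0 k)) (mul_nonneg ht (hν0 k))
      · simp [hμI k hk, hνI k hk]
      · simp [sum_add_distrib, ← mul_sum, hμ1, hν1, hst]
      · simp [add_smul, mul_smul, sum_add_distrib, ← smul_sum]
  · rintro ⟨μ, hμ0, hμI, hμ1, rfl⟩
    have hsub : ∀ k ∈ univ, k ∉ I → μ k = 0 := fun k _ => hμI k
    have hμ1' : ∑ k ∈ I, μ k = 1 := by rwa [sum_subset (subset_univ I) hsub]
    rw [← sum_subset (subset_univ I) fun k _ hk => by rw [hμI k hk, zero_smul],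
      ← centerMass_eq_of_sum_1 _ _ hμ1']
    exact I.centerMass_mem_convexHull (fun k _ => hμ0 k) (by rw [hμ1']; exact one_pos)
      fun k hk => ⟨k, hk, rfl⟩

theorem exists_subdecomposition_zero_notMem_convexHull (w : ι → E) (ρ : ι → 𝕜)
    (hρ : ∀ k, 0 ≤ ρ k) :
    ∃ σ : ι → 𝕜, (∀ k, 0 ≤ σ k ∧ σ k ≤ ρ k) ∧ ∑ k, σ k • w k = ∑ k, ρ k • w k ∧
      (0 : E) ∉ convexHull 𝕜 (w '' ↑(univ.filter fun k => 0 < σ k)) := by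
  induction hn : #(univ.filter fun k => 0 < ρ k) using Nat.strong_induction_on
    generalizing ρ with
  | _ n ih =>
  by_cases h0 : (0 : E) ∈ convexHull 𝕜 (w '' ↑(univ.filter fun k => 0 < ρ k))
  swap
  · exact ⟨ρ, fun k => ⟨hρ k, le_rfl⟩, rfl, h0⟩
  obtain ⟨μ, hμ0, hμρ, hμ1, hμw⟩ := mem_convexHull_image_iff.mp h0
  have hμρ' : ∀ k, 0 < μ k → 0 < ρ k := fun k hk => by
    by_contra h
    exact hk.ne' (hμρ k (by simpa using h))
  have hne : (univ.filter fun k => 0 < μ k).Nonempty := by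
    obtain ⟨k, -, hk⟩ := exists_lt_of_sum_lt (s := univ) (f := 0) (g := μ) (by simp [hμ1])
    exact ⟨k, by simpa using hk⟩
  -- the largest step along `-μ` keeping `ρ` nonnegative kills the coordinate `i`
  obtain ⟨i, hi, hmin⟩ := exists_min_image _ (fun k => ρ k / μ k) hne
  rw [mem_filter] at hi
  set t := ρ i / μ i
  have ht : 0 ≤ t := div_nonneg (hρ i) (hμ0 i)
  set ρ' := fun k => ρ k - t * μ k
  have hρ' : ∀ k, 0 ≤ ρ' k ∧ ρ' k ≤ ρ k := fun k => by
    refine ⟨?_, sub_le_self _ (mul_nonneg ht (hμ0 k))⟩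
    rcases (hμ0 k).eq_or_lt with hk | hk
    · simp [ρ', ← hk, hρ k]
    · have := hmin k (by simpa using hk)
      rw [le_div_iff₀ hk] at this
      exact sub_nonneg.mpr this
  have hsum : ∑ k, ρ' k • w k = ∑ k, ρ k • w k := by
    simp [ρ', sub_smul, sum_sub_distrib, mul_smul, ← smul_sum, hμw]
  have hcard : #(univ.filter fun k => 0 < ρ' k) < n := by
    rw [← hn]
    refine card_lt_card ⟨fun k hk => ?_, fun hsub => ?_⟩
    · simp only [mem_filter, mem_univ, true_and] at hk ⊢
      exact hk.trans_le (hρ' k).2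
    have := hsub (mem_filter.mpr ⟨mem_univ i, hμρ' i hi.2⟩)
    simp [ρ', t, hi.2.ne'] at this
  obtain ⟨σ, hσ, hσw, hσ0⟩ := ih _ hcard ρ' (fun k => (hρ' k).1) rfl
  exact ⟨σ, fun k => ⟨(hσ k).1, (hσ k).2.trans (hρ' k).2⟩, hσw.trans hsum, hσ0⟩

end Algebraic

section InnerProduct

variable {E ι : Type*} [NormedAddCommGroup E] [InnerProductSpace ℝ E] [Fintype ι]

def HasControlledDecompositions (w : ι → E) (C : ℝ) : Prop :=
  ∀ z : E, ‖z‖ = 1 → ∀ ξ : ι → ℝ, (∀ k, 0 ≤ ξ k) →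
    ∃ Z : ι → ℝ, (∀ k, 0 ≤ Z k) ∧ ∑ k, Z k • w k = z ∧
      (∀ Z' : ι → ℝ, (∀ k, 0 ≤ Z' k) → ∑ k, Z' k • w k = z →
        ∑ k, Z k * ξ k ≤ ∑ k, Z' k * ξ k) ∧ ∑ k, Z k ≤ C

theorem mul_sum_le_norm_sum_smul {w : ι → E} {σ : ι → ℝ} (hσ : ∀ k, 0 ≤ σ k) {u : E}
    (hu : ‖u‖ ≤ 1) {δ : ℝ} (hδ : ∀ k, 0 < σ k → δ ≤ ⟪w k, u⟫) :
    δ * ∑ k, σ k ≤ ‖∑ k, σ k • w k‖ :=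
  calc δ * ∑ k, σ k = ∑ k, σ k * δ := by rw [mul_sum]; simp only [mul_comm]
    _ ≤ ∑ k, σ k * ⟪w k, u⟫ := by
      refine sum_le_sum fun k _ => ?_
      rcases (hσ k).eq_or_lt with hk | hk
      · simp [← hk]
      · exact mul_le_mul_of_nonneg_left (hδ k hk) hk.le
    _ = ⟪∑ k, σ k • w k, u⟫ := by simp [sum_inner, real_inner_smul_left]
    _ ≤ ‖∑ k, σ k • w k‖ * ‖u‖ := real_inner_le_norm _ _
    _ ≤ ‖∑ k, σ k • w k‖ := mul_le_of_le_one_right (norm_nonneg _) hu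

namespace HasControlledDecompositions

variable {w : ι → E} {C : ℝ} {I : Finset ι}

theorem inv_le_norm_of_sq_norm_le_inner (hw : HasControlledDecompositions w C) {p : E}
    (hp0 : p ≠ 0) (hp : p ∈ convexHull ℝ (w '' I)) (hvar : ∀ i ∈ I, ‖p‖ ^ 2 ≤ ⟪p, w i⟫) :
    C⁻¹ ≤ ‖p‖ := by
  obtain ⟨μ, hμ0, hμI, hμ1, hμp⟩ := mem_convexHull_image_iff.mp hp
  have hpos : 0 < ‖p‖ := norm_pos_iff.mpr hp0
  -- complementary slackness: `p` is a convex combination of directions `w k` that all have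
  -- the same projection `‖p‖` on `p / ‖p‖`
  have hslack : ∀ k, μ k ≠ 0 → ⟪p, w k⟫ = ‖p‖ ^ 2 := by
    have hle : ∀ k ∈ univ, μ k * ‖p‖ ^ 2 ≤ μ k * ⟪p, w k⟫ := fun k _ => by
      by_cases hk : k ∈ I
      · exact mul_le_mul_of_nonneg_left (hvar k hk) (hμ0 k)
      · simp [hμI k hk]
    have heq : ∑ k, μ k * ‖p‖ ^ 2 = ∑ k, μ k * ⟪p, w k⟫ := by
      rw [← sum_mul, hμ1, one_mul, ← real_inner_self_eq_norm_sq]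
      nth_rw 2 [← hμp]
      simp [inner_sum, real_inner_smul_right]
    intro k hk
    exact (mul_left_cancel₀ hk ((sum_eq_sum_iff_of_le hle).mp heq k (mem_univ k))).symm
  set u := ‖p‖⁻¹ • p
  have hu : ‖u‖ = 1 := by simp [u, norm_smul, hpos.ne']
  set ξ : ι → ℝ := fun k => if μ k = 0 then 1 else 0
  have hξ0 : ∀ k, 0 ≤ ξ k := fun k => by simp only [ξ]; split_ifs <;> norm_num
  obtain ⟨Z, hZ0, hZu, hZmin, hZC⟩ := hw u hu ξ hξ0
  -- `‖p‖⁻¹ • μ` decomposes `u` at zero cost, hence so does the optimal `Z`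
  have hZμ : ∀ k, μ k = 0 → Z k = 0 := by
    have hcost : ∑ k, Z k * ξ k = 0 := by
      refine le_antisymm ?_ (sum_nonneg fun k _ => mul_nonneg (hZ0 k) (hξ0 k))
      refine (hZmin (fun k => ‖p‖⁻¹ * μ k) (fun k => mul_nonneg (by positivity) (hμ0 k))
        ?_).trans_eq ?_
      · simp [u, ← hμp, smul_sum, mul_smul]
      · exact sum_eq_zero fun k _ => by by_cases h : μ k = 0 <;> simp [ξ, h]
    intro k hk
    have := (sum_eq_zero_iff_of_nonneg fun j _ => mul_nonneg (hZ0 j) (hξ0 j)).mp hcost k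
      (mem_univ k)
    simpa [ξ, hk] using this
  have hone : 1 = ‖p‖ * ∑ k, Z k :=
    calc (1 : ℝ) = ⟪∑ k, Z k • w k, u⟫ := by rw [hZu, real_inner_self_eq_norm_sq, hu]; norm_num
      _ = ∑ k, Z k * ‖p‖ := by
        simp only [sum_inner, real_inner_smul_left]
        refine sum_congr rfl fun k _ => ?_
        by_cases hk : μ k = 0
        · simp [hZμ k hk]
        · rw [real_inner_comm, real_inner_smul_left, hslack k hk]
          field_simp
      _ = ‖p‖ * ∑ k, Z k := by rw [← sum_mul, mul_comm]
  refine inv_le_of_inv_le₀ hpos ?_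
  rw [inv_le_iff_one_le_mul₀' hpos]
  exact hone.trans_le (mul_le_mul_of_nonneg_left hZC hpos.le)

theorem inv_le_norm_of_zero_notMem_convexHull (hw : HasControlledDecompositions w C)
    (h0 : (0 : E) ∉ convexHull ℝ (w '' I)) {a : E} (ha : a ∈ convexHull ℝ (w '' I)) :
    C⁻¹ ≤ ‖a‖ := by
  have hconv : Convex ℝ (convexHull ℝ (w '' I)) := convex_convexHull ℝ _
  have hcomp : IsCompact (convexHull ℝ (w '' I)) :=
    (I.finite_toSet.image w).isCompact_convexHull ℝ
  obtain ⟨p, hp, hpmin⟩ := exists_norm_eq_iInf_of_complete_convex ⟨a, ha⟩ hcomp.isComplete hconv 0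
  have hvar : ∀ b ∈ convexHull ℝ (w '' I), ‖p‖ ^ 2 ≤ ⟪p, b⟫ := fun b hb => by
    have := (norm_eq_iInf_iff_real_inner_le_zero hconv hp).mp hpmin b hb
    rw [zero_sub, inner_neg_left, inner_sub_right, real_inner_self_eq_norm_sq] at this
    linarith
  have hp0 : p ≠ 0 := fun h => h0 (h ▸ hp)
  have hpa : ‖p‖ ≤ ‖a‖ := by
    have hpos : 0 < ‖p‖ := norm_pos_iff.mpr hp0
    refine le_of_mul_le_mul_left ?_ hpos
    calc ‖p‖ * ‖p‖ = ‖p‖ ^ 2 := (sq _).symm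
      _ ≤ ⟪p, a⟫ := hvar a ha
      _ ≤ ‖p‖ * ‖a‖ := real_inner_le_norm _ _
  exact (hw.inv_le_norm_of_sq_norm_le_inner hp0 hp fun i hi =>
    hvar _ (subset_convexHull ℝ _ ⟨i, hi, rfl⟩)).trans hpa

theorem zero_mem_convexHull_of_dist_lt {w' : ι → E} (hw' : HasControlledDecompositions w' C)
    (hdist : ∀ k, dist (w' k) (w k) < C⁻¹) (h0 : (0 : E) ∈ convexHull ℝ (w '' I)) :
    (0 : E) ∈ convexHull ℝ (w' '' I) := by
  obtain ⟨μ, hμ0, hμI, hμ1, hμw⟩ := mem_convexHull_image_iff.mp h0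
  by_contra h0'
  have hle := hw'.inv_le_norm_of_zero_notMem_convexHull h0'
    (mem_convexHull_image_iff.mpr ⟨μ, hμ0, hμI, hμ1, rfl⟩)
  have hlt : ∑ k, μ k • (w' k - w k) ∈ Metric.ball (0 : E) C⁻¹ :=
    (convex_ball 0 C⁻¹).sum_mem (fun k _ => hμ0 k) hμ1 fun k _ => by
      simpa [dist_eq_norm] using hdist k
  simp only [smul_sub, sum_sub_distrib, hμw, sub_zero, mem_ball_zero_iff] at hlt
  exact hle.not_gt hlt

end HasControlledDecompositions

theorem IsPreconnected.zero_mem_convexHull_iff {X : Type*} [TopologicalSpace X] {K : Set X}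
    (hK : IsPreconnected K) {v : ι → X → E} (hv : ∀ k, ContinuousOn (v k) K) {C : ℝ}
    (hC : 0 < C) (hctrl : ∀ y ∈ K, HasControlledDecompositions (fun k => v k y) C)
    (I : Finset ι) {x y : X} (hx : x ∈ K) (hy : y ∈ K) :
    (0 : E) ∈ convexHull ℝ ((fun k => v k x) '' I) ↔
      (0 : E) ∈ convexHull ℝ ((fun k => v k y) '' I) := by
  have hnear : ∀ x ∈ K, ∀ᶠ y in 𝓝[K] x, ∀ k, dist (v k y) (v k x) < C⁻¹ := fun x hx =>
    Filter.eventually_all.mpr fun k =>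
      (hv k x hx).eventually (Metric.ball_mem_nhds _ (inv_pos.mpr hC))
  refine hK.induction₂ (fun x y => (0 : E) ∈ convexHull ℝ ((fun k => v k x) '' I) ↔
    (0 : E) ∈ convexHull ℝ ((fun k => v k y) '' I)) (fun x hx => ?_)
    (fun _ _ _ _ _ _ => Iff.trans) (fun _ _ _ _ => Iff.symm) hx hy
  filter_upwards [hnear x hx, self_mem_nhdsWithin] with y hxy hy
  exact ⟨(hctrl y hy).zero_mem_convexHull_of_dist_lt hxy,
    (hctrl x hx).zero_mem_convexHull_of_dist_lt fun k => by rw [dist_comm]; exact hxy k⟩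

end InnerProduct

theorem stmt_13_general (d N : ℕ)
    (K : Set (EuclideanSpace ℝ (Fin d))) (hKconn : IsConnected K)
    (v : Fin N → EuclideanSpace ℝ (Fin d) → EuclideanSpace ℝ (Fin d))
    (hv_cont : ∀ k, ContinuousOn (v k) K)
    -- controlled decomposition hypothesis
    (hctrl : ∃ C : ℝ, 0 < C ∧ ∀ x ∈ K, ∀ z : EuclideanSpace ℝ (Fin d), ‖z‖ = 1 →
      ∀ ξ' : Fin N → ℝ, (∀ k, 0 ≤ ξ' k) →
        ∃ Z : Fin N → ℝ, (∀ k, 0 ≤ Z k) ∧ (∑ k, Z k • v k x = z) ∧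
          (∀ Z' : Fin N → ℝ, (∀ k, 0 ≤ Z' k) → ∑ k, Z' k • v k x = z →
            ∑ k, Z k * ξ' k ≤ ∑ k, Z' k * ξ' k) ∧ (∑ k, Z k ≤ C))
    -- δ is the constant from the dichotomy lemma
    (δ : ℝ) (hδ0 : 0 < δ)
    (hδ : ∀ I : Finset (Fin N),
      (∀ x ∈ K, (0 : EuclideanSpace ℝ (Fin d)) ∉
          convexHull ℝ {w | ∃ i ∈ I, w = v i x}) →
      ∀ x ∈ K, ∃ u : EuclideanSpace ℝ (Fin d), ‖u‖ = 1 ∧ ∀ i ∈ I, δ ≤ ⟪v i x, u⟫) :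
    ∀ x ∈ K, ∀ z : EuclideanSpace ℝ (Fin d), ∀ ρ : Fin N → ℝ,
      (∀ k, 0 ≤ ρ k) → (∑ k, ρ k • v k x = z) →
      ∃ ρ' : Fin N → ℝ, (∀ k, 0 ≤ ρ' k ∧ ρ' k ≤ ρ k) ∧
        (∑ k, ρ' k • v k x = z) ∧ (∑ k, ρ' k ≤ (1 / δ) * ‖z‖) := by
  intro x hx z ρ hρ hρz
  obtain ⟨C, hC, hctrl⟩ := hctrl
  obtain ⟨σ, hσρ, hσρz, h0⟩ := exists_subdecomposition_zero_notMem_convexHull (v · x) ρ hρ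
  set I := univ.filter fun k => 0 < σ k
  have himage : ∀ y, {w | ∃ i ∈ I, w = v i y} = (v · y) '' I := fun y => by
    ext; simp [eq_comm]
  have h0K : ∀ y ∈ K, (0 : EuclideanSpace ℝ (Fin d)) ∉ convexHull ℝ {w | ∃ i ∈ I, w = v i y} :=
    fun y hy => by
      rwa [himage, ← hKconn.isPreconnected.zero_mem_convexHull_iff hv_cont hC hctrl I hx hy]
  obtain ⟨u, hu, hδu⟩ := hδ I h0K x hx
  have hmass := mul_sum_le_norm_sum_smul (fun k => (hσρ k).1) hu.le
    fun k hk => hδu k (mem_filter.mpr ⟨mem_univ k, hk⟩)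
  refine ⟨σ, hσρ, hσρz.trans hρz, ?_⟩
  rw [hσρz, hρz] at hmass
  rw [one_div, ← div_eq_inv_mul, le_div_iff₀ hδ0, mul_comm]
  exact hmass

/-- pointwise reduction to controlled decompositions: any conical
decomposition `ρ` of `z` in the directions `v_k(x)` can be lowered to a decomposition
`ρ̄ ≤ ρ` of `z` with `Σ_k ρ̄_k ≤ (1/δ)|z|`. -/
theorem stmt_13 (d N : ℕ)
    (K : Set (EuclideanSpace ℝ (Fin d))) (hKcomp : IsCompact K) (hKconn : IsConnected K)
    (v : Fin N → EuclideanSpace ℝ (Fin d) → EuclideanSpace ℝ (Fin d))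
    (hv_cont : ∀ k, ContinuousOn (v k) K)
    (hv_unit : ∀ k, ∀ x ∈ K, ‖v k x‖ = 1)
    -- controlled decomposition hypothesis
    (hctrl : ∃ C : ℝ, 0 < C ∧ ∀ x ∈ K, ∀ z : EuclideanSpace ℝ (Fin d), ‖z‖ = 1 →
      ∀ ξ' : Fin N → ℝ, (∀ k, 0 ≤ ξ' k) →
        ∃ Z : Fin N → ℝ, (∀ k, 0 ≤ Z k) ∧ (∑ k, Z k • v k x = z) ∧
          (∀ Z' : Fin N → ℝ, (∀ k, 0 ≤ Z' k) → ∑ k, Z' k • v k x = z →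
            ∑ k, Z k * ξ' k ≤ ∑ k, Z' k * ξ' k) ∧ (∑ k, Z k ≤ C))
    -- δ is the constant from the dichotomy lemma
    (δ : ℝ) (hδ0 : 0 < δ) (hδ1 : δ < 1)
    (hδ : ∀ I : Finset (Fin N),
      (∀ x ∈ K, (0 : EuclideanSpace ℝ (Fin d)) ∉
          convexHull ℝ {w | ∃ i ∈ I, w = v i x}) →
      ∀ x ∈ K, ∃ u : EuclideanSpace ℝ (Fin d), ‖u‖ = 1 ∧ ∀ i ∈ I, δ ≤ ⟪v i x, u⟫) :
    ∀ x ∈ K, ∀ z : EuclideanSpace ℝ (Fin d), ∀ ρ : Fin N → ℝ,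
      (∀ k, 0 ≤ ρ k) → (∑ k, ρ k • v k x = z) →
      ∃ ρ' : Fin N → ℝ, (∀ k, 0 ≤ ρ' k ∧ ρ' k ≤ ρ k) ∧
        (∑ k, ρ' k • v k x = z) ∧ (∑ k, ρ' k ≤ (1 / δ) * ‖z‖) :=
  stmt_13_general d N K hKconn v hv_cont hctrl δ hδ0 hδ
end

section
/- Closedness of the Young-measure constraint set (step 2 of Lemma 5.5): let v_1,…,v_N : ℝ^d → S^{d-1} be continuous, K > 0, and suppose (σ^n, ν_t^n ⊗ λ) are pairs with σ^n : [0,1] → ℝ^d K-Lipschitz, ν_t^n probability measures supported in the closed ball B_{K'} (K' > 0 fixed), satisfying σ̇^n(t) = ∫_{ℝ^d} v dν_t^n(v) for a.e. t and supp ν_t^n ⊂ ∪_k ℝ_+ v_k(σ^n(t)) for a.e. t. If σ^n → σ uniformly and ν_t^n ⊗ λ → ν_t ⊗ λ narrowly, then the limit satisfies the same two conditions: σ̇(t) = ∫ v dν_t(v) a.e. and supp ν_t ⊂ ∪_k ℝ_+ v_k(σ(t)) for a.e. t. -/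
/-!
Both constraints pass to the limit by testing the narrow convergence against suitable bounded
continuous functions of `(w, t)`.

For the velocity, `σⁿ(t) - σⁿ(0) = ∫₀ᵗ ∫ w dνₛⁿ ds` coordinatewise (fundamental theorem of calculus
for the Lipschitz `σⁿ`). Testing against `ψ(s) · wᵢ`, with `wᵢ` truncated outside the ball `B_{K'}`
and `ψ` continuous cutoffs within `1/j` of `1_{[0,t]}`, passes this identity to the limit, and the
Lebesgue differentiation theorem turns `σ(t) = σ(0) + ∫₀ᵗ ∫ w dνₛ ds` into `σ̇ = ∫ w dν_t`.

For the support, the set `C` of pairs `(x, w)` with `w` on one of the rays `ℝ₊ v_k(x)` is closed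
(`w ∈ ℝ₊ u ↔ w = ‖w‖ u` for a unit vector `u`). Since `dist(·, C)` is `1`-Lipschitz, the test
function `min 1 (dist((σ(t), w), C) - ε)⁺` vanishes on the support of `ν_tⁿ` as soon as `σⁿ` is
uniformly `ε`-close to `σ`, so `ν_t` gives no mass to the points at distance `> ε` from `C`.
-/

open MeasureTheory Filter Topology Set
open scoped BoundedContinuousFunction

theorem AbsolutelyContinuousOnInterval.integral_eq_sub_of_ae_hasDerivAt {f f' : ℝ → ℝ}
    {a b : ℝ} (hf : AbsolutelyContinuousOnInterval f a b)
    (hf' : ∀ᵐ x, x ∈ uIcc a b → HasDerivAt f (f' x) x) :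
    IntervalIntegrable f' volume a b ∧ ∫ x in a..b, f' x = f b - f a := by
  have hderiv : ∀ᵐ x, x ∈ uIoc a b → deriv f x = f' x := by
    filter_upwards [hf'] with x hx hxI using (hx (uIoc_subset_uIcc hxI)).deriv
  refine ⟨hf.intervalIntegrable_deriv.congr_ae ?_, ?_⟩
  · exact (ae_restrict_iff' measurableSet_uIoc).2 hderiv
  · rw [← hf.integral_deriv_eq_sub]
    exact (intervalIntegral.integral_congr_ae hderiv).symm

def cutoff (t : ℝ) (j : ℕ) (u : ℝ) : ℝ := max 0 (min 1 (1 + j * (t - u)))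

lemma continuous_cutoff (t : ℝ) (j : ℕ) : Continuous (cutoff t j) := by
  unfold cutoff; fun_prop

lemma cutoff_eq_one {t u : ℝ} (j : ℕ) (hu : u ≤ t) : cutoff t j u = 1 := by
  have : 0 ≤ (j : ℝ) * (t - u) := mul_nonneg j.cast_nonneg (sub_nonneg.2 hu)
  simp [cutoff, min_eq_left (by linarith : (1:ℝ) ≤ 1 + j * (t - u))]

lemma cutoff_eq_zero {t u : ℝ} {j : ℕ} (hj : 0 < j) (hu : t + 1 / j ≤ u) : cutoff t j u = 0 := by
  have hj' : (0:ℝ) < j := by exact_mod_cast hj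
  have : 1 ≤ (j : ℝ) * (u - t) := by
    rw [← div_le_iff₀' hj']; linarith
  simp only [cutoff]
  exact max_eq_left (min_le_right _ _ |>.trans (by linarith))

lemma abs_cutoff_le_one (t : ℝ) (j : ℕ) (u : ℝ) : |cutoff t j u| ≤ 1 := by
  rw [abs_le]; constructor <;> simp only [cutoff] <;>
    linarith [le_max_left 0 (min 1 (1 + j * (t - u))), min_le_left 1 (1 + j * (t - u)),
      max_le zero_le_one (min_le_left 1 (1 + j * (t - u)))]

lemma abs_integral_cutoff_mul_sub_le {h : ℝ → ℝ} {C t : ℝ} {j : ℕ} (hj : 0 < j)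
    (ht : t ∈ Icc (0:ℝ) 1) (hh : IntervalIntegrable h volume 0 1) (hC : ∀ u, |h u| ≤ C) :
    |(∫ u in (0:ℝ)..1, cutoff t j u * h u) - ∫ u in (0:ℝ)..t, h u| ≤ C / j := by
  set s := min 1 (t + 1 / j)
  have hts : t ≤ s := le_min ht.2 (le_add_of_nonneg_right (by positivity))
  have hs1 : s ≤ 1 := min_le_left _ _
  have hg : IntervalIntegrable (fun u => cutoff t j u * h u) volume 0 1 :=
    hh.continuousOn_mul (continuous_cutoff t j).continuousOn
  have hsub : ∀ a b, a ∈ Icc (0:ℝ) 1 → b ∈ Icc (0:ℝ) 1 →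
      IntervalIntegrable (fun u => cutoff t j u * h u) volume a b := fun a b ha hb =>
    hg.mono_set <| uIcc_subset_uIcc (by rwa [uIcc_of_le zero_le_one])
      (by rwa [uIcc_of_le zero_le_one])
  have hsI : s ∈ Icc (0:ℝ) 1 := ⟨ht.1.trans hts, hs1⟩
  have h0I : (0:ℝ) ∈ Icc (0:ℝ) 1 := ⟨le_rfl, zero_le_one⟩
  have h1I : (1:ℝ) ∈ Icc (0:ℝ) 1 := ⟨zero_le_one, le_rfl⟩
  have hleft : ∫ u in (0:ℝ)..t, cutoff t j u * h u = ∫ u in (0:ℝ)..t, h u := by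
    refine intervalIntegral.integral_congr fun u hu => ?_
    rw [uIcc_of_le ht.1] at hu
    simp [cutoff_eq_one j hu.2]
  have hright : ∫ u in s..1, cutoff t j u * h u = 0 := by
    refine intervalIntegral.integral_zero_ae (ae_of_all _ fun u hu => ?_)
    rw [uIoc_of_le hs1] at hu
    have : t + 1 / j < u := (min_lt_iff.1 hu.1).resolve_left (not_lt.2 hu.2)
    simp [cutoff_eq_zero hj this.le]
  have hmid : |∫ u in t..s, cutoff t j u * h u| ≤ C / j := by
    have hC0 : 0 ≤ C := (abs_nonneg _).trans (hC 0)
    calc |∫ u in t..s, cutoff t j u * h u| ≤ C * |s - t| :=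
          intervalIntegral.norm_integral_le_of_norm_le_const (f := fun u => cutoff t j u * h u)
            fun u _ => by
              rw [Real.norm_eq_abs, abs_mul]
              nlinarith [abs_cutoff_le_one t j u, hC u, abs_nonneg (cutoff t j u),
                abs_nonneg (h u)]
      _ ≤ C * (1 / j) := by
          rw [abs_of_nonneg (sub_nonneg.2 hts)]
          exact mul_le_mul_of_nonneg_left (by linarith [min_le_right 1 (t + 1 / j)]) hC0
      _ = C / j := by ring
  rw [← intervalIntegral.integral_add_adjacent_intervals (hsub 0 t h0I ht) (hsub t 1 ht h1I),
    ← intervalIntegral.integral_add_adjacent_intervals (hsub t s ht hsI) (hsub s 1 hsI h1I),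
    hleft, hright]
  simpa using hmid

theorem tendsto_intervalIntegral_of_tendsto_integral_mul {h : ℝ → ℝ} {hn : ℕ → ℝ → ℝ}
    {C t : ℝ} (ht : t ∈ Icc (0:ℝ) 1) (hh : IntervalIntegrable h volume 0 1)
    (hhn : ∀ n, IntervalIntegrable (hn n) volume 0 1) (hC : ∀ u, |h u| ≤ C)
    (hCn : ∀ n u, |hn n u| ≤ C)
    (hweak : ∀ ψ : ℝ →ᵇ ℝ, Tendsto (fun n => ∫ u in (0:ℝ)..1, ψ u * hn n u) atTop
      (𝓝 (∫ u in (0:ℝ)..1, ψ u * h u))) :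
    Tendsto (fun n => ∫ u in (0:ℝ)..t, hn n u) atTop (𝓝 (∫ u in (0:ℝ)..t, h u)) := by
  refine Metric.tendsto_nhds.2 fun ε hε => ?_
  have hC0 : 0 ≤ C := (abs_nonneg _).trans (hC 0)
  obtain ⟨j, hj⟩ := exists_nat_gt (3 * C / ε)
  have hj0 : 0 < j := by exact_mod_cast (div_nonneg (by positivity) hε.le).trans_lt hj
  have hCj : C / j < ε / 3 := by
    rw [div_lt_iff₀ hε] at hj
    rw [div_lt_iff₀ (by exact_mod_cast hj0)]
    linarith
  let ψ : ℝ →ᵇ ℝ := .ofNormedAddCommGroup _ (continuous_cutoff t j) 1 (abs_cutoff_le_one t j)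
  filter_upwards [Metric.tendsto_nhds.1 (hweak ψ) (ε / 3) (by positivity)] with n hn
  have hn' := abs_integral_cutoff_mul_sub_le hj0 ht (hhn n) (hCn n)
  have hlim := abs_integral_cutoff_mul_sub_le hj0 ht hh hC
  simp only [ψ, BoundedContinuousFunction.coe_ofNormedAddCommGroup, Real.dist_eq] at hn ⊢
  rw [abs_lt] at hn ⊢
  rw [abs_le] at hn' hlim
  constructor <;> linarith

theorem ae_hasDerivAt_of_eq_add_integral {F : Type*} [NormedAddCommGroup F] [NormedSpace ℝ F]
    [CompleteSpace F] {f g : ℝ → F} {a b : ℝ} (hg : IntervalIntegrable g volume a b)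
    (hf : ∀ t ∈ Icc a b, f t = f a + ∫ u in a..t, g u) :
    ∀ᵐ t ∂volume.restrict (Icc a b), HasDerivAt f (g t) t := by
  have hIoo : ∀ᵐ t ∂volume.restrict (Icc a b), t ∈ Ioo a b := by
    rw [Measure.restrict_congr_set Ioo_ae_eq_Icc.symm]
    exact ae_restrict_mem measurableSet_Ioo
  filter_upwards [ae_restrict_of_ae hg.ae_hasDerivAt_integral, hIoo] with t hLeb ht
  have hab : a ≤ b := (ht.1.trans ht.2).le
  have hint := (hLeb (by simpa [uIcc_of_le hab] using Ioo_subset_Icc_self ht) a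
    left_mem_uIcc).const_add (f a)
  refine hint.congr_of_eventuallyEq ?_
  filter_upwards [Ioo_mem_nhds ht.1 ht.2] with x hx using hf x (Ioo_subset_Icc_self hx)

lemma exists_nonneg_smul_eq_iff {E : Type*} [NormedAddCommGroup E] [NormedSpace ℝ E] {u w : E}
    (hu : ‖u‖ = 1) : (∃ s : ℝ, 0 ≤ s ∧ w = s • u) ↔ w = ‖w‖ • u := by
  refine ⟨?_, fun h => ⟨_, norm_nonneg w, h⟩⟩
  rintro ⟨s, hs, rfl⟩
  rw [norm_smul, hu, mul_one, Real.norm_of_nonneg hs]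

lemma isClosed_setOf_exists_nonneg_smul {X E ι : Type*} [TopologicalSpace X]
    [NormedAddCommGroup E] [NormedSpace ℝ E] [Finite ι] {v : ι → X → E}
    (hv : ∀ k, Continuous (v k)) (hv1 : ∀ k x, ‖v k x‖ = 1) :
    IsClosed {p : X × E | ∃ k, ∃ s : ℝ, 0 ≤ s ∧ p.2 = s • v k p.1} := by
  have : {p : X × E | ∃ k, ∃ s : ℝ, 0 ≤ s ∧ p.2 = s • v k p.1} =
      ⋃ k, {p : X × E | p.2 = ‖p.2‖ • v k p.1} := by
    ext p
    simp only [mem_iUnion]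
    exact exists_congr fun k => exists_nonneg_smul_eq_iff (hv1 k p.1)
  rw [this]
  exact isClosed_iUnion_of_finite fun k =>
    isClosed_eq continuous_snd
      ((continuous_norm.comp continuous_snd).smul ((hv k).comp continuous_fst))

section Young

variable {E : Type*} [TopologicalSpace E] [MeasurableSpace E]

/-- Narrow convergence `ν_tⁿ ⊗ λ → ν_t ⊗ λ` on `E × [0,1]`. -/
def TendstoYoung (νn : ℕ → ℝ → Measure E) (ν : ℝ → Measure E) : Prop :=
  ∀ f : E × ℝ →ᵇ ℝ, Tendsto (fun n => ∫ t in (0:ℝ)..1, ∫ w, f (w, t) ∂νn n t) atTop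
    (𝓝 (∫ t in (0:ℝ)..1, ∫ w, f (w, t) ∂ν t))

variable {νn : ℕ → ℝ → Measure E} {ν : ℝ → Measure E}

theorem TendstoYoung.tendsto_integral_mul (h : TendstoYoung νn ν) (ψ : ℝ →ᵇ ℝ) (φ : E →ᵇ ℝ) :
    Tendsto (fun n => ∫ t in (0:ℝ)..1, ψ t * ∫ w, φ w ∂νn n t) atTop
      (𝓝 (∫ t in (0:ℝ)..1, ψ t * ∫ w, φ w ∂ν t)) := by
  have := h (ψ.compContinuous ⟨Prod.snd, continuous_snd⟩ *
    φ.compContinuous ⟨Prod.fst, continuous_fst⟩)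
  simp only [BoundedContinuousFunction.coe_mul, Pi.mul_apply, ContinuousMap.coe_mk,
    BoundedContinuousFunction.compContinuous_apply, integral_const_mul] at this
  exact this

variable [OpensMeasurableSpace E]

lemma BoundedContinuousFunction.integrable_comp_prodMk (f : E × ℝ →ᵇ ℝ) (μ : Measure E)
    [IsFiniteMeasure μ] (t : ℝ) : Integrable (fun w => f (w, t)) μ :=
  (f.compContinuous ⟨fun w => (w, t), by fun_prop⟩).integrable μ

variable [∀ t, IsProbabilityMeasure (ν t)] [∀ n t, IsProbabilityMeasure (νn n t)]

theorem TendstoYoung.intervalIntegrable (h : TendstoYoung νn ν) (f : E × ℝ →ᵇ ℝ)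
    (hfn : ∀ᶠ n in atTop, IntervalIntegrable (fun t => ∫ w, f (w, t) ∂νn n t) volume 0 1) :
    IntervalIntegrable (fun t => ∫ w, f (w, t) ∂ν t) volume 0 1 := by
  set g := f + BoundedContinuousFunction.const _ 1
  have hg (μ : Measure E) [IsProbabilityMeasure μ] (t : ℝ) :
      ∫ w, g (w, t) ∂μ = ∫ w, f (w, t) ∂μ + 1 := by
    simp [g, integral_add (f.integrable_comp_prodMk μ t) (integrable_const (1 : ℝ))]
  by_contra hF
  have hF1 : ¬ IntervalIntegrable (fun t => ∫ w, f (w, t) ∂ν t + 1) volume 0 1 :=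
    fun h1 => hF (by simpa using h1.sub (intervalIntegrable_const (c := (1:ℝ))))
  -- both limit integrals are now the junk value `0`, while the approximating ones differ by `1`
  have hf := h f
  have hg' := h g
  simp only [hg, intervalIntegral.integral_undef hF, intervalIntegral.integral_undef hF1] at hf hg'
  have : Tendsto (fun n => ∫ t in (0:ℝ)..1, (∫ w, f (w, t) ∂νn n t + 1)) atTop (𝓝 1) := by
    have h1 := hf.add_const 1
    rw [zero_add] at h1
    refine h1.congr' ?_
    filter_upwards [hfn] with n hn
    rw [intervalIntegral.integral_add hn intervalIntegrable_const]
    simp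
  exact zero_ne_one (tendsto_nhds_unique hg' this)

theorem TendstoYoung.ae_ae_eq_zero (h : TendstoYoung νn ν) (f : E × ℝ →ᵇ ℝ) (hf : 0 ≤ f)
    (hfn : ∀ᶠ n in atTop, ∀ᵐ t ∂volume.restrict (Icc (0:ℝ) 1), ∀ᵐ w ∂νn n t, f (w, t) = 0) :
    ∀ᵐ t ∂volume.restrict (Icc (0:ℝ) 1), ∀ᵐ w ∂ν t, f (w, t) = 0 := by
  rw [Measure.restrict_congr_set Ioc_ae_eq_Icc.symm] at hfn ⊢
  have hFn : ∀ᶠ n in atTop,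
      (fun t => ∫ w, f (w, t) ∂νn n t) =ᵐ[volume.restrict (Ioc (0:ℝ) 1)] 0 := by
    filter_upwards [hfn] with n hn
    filter_upwards [hn] with t ht
    simp [integral_congr_ae ht]
  have hF : IntervalIntegrable (fun t => ∫ w, f (w, t) ∂ν t) volume 0 1 := by
    refine h.intervalIntegrable f ?_
    filter_upwards [hFn] with n hn
    exact (intervalIntegrable_iff_integrableOn_Ioc_of_le zero_le_one).2
      ((integrable_zero _ _ _).congr hn.symm)
  have hF0 : ∫ t in (0:ℝ)..1, ∫ w, f (w, t) ∂ν t = 0 := by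
    refine tendsto_nhds_unique (h f) (tendsto_const_nhds.congr' ?_)
    filter_upwards [hFn] with n hn
    rw [intervalIntegral.integral_of_le zero_le_one, integral_congr_ae hn]
    simp
  have hf_nonneg (μ : Measure E) (t : ℝ) : 0 ≤ ∫ w, f (w, t) ∂μ :=
    integral_nonneg fun w => hf (w, t)
  rw [intervalIntegral.integral_of_le zero_le_one, integral_eq_zero_iff_of_nonneg
    (fun t => hf_nonneg _ t) ((intervalIntegrable_iff_integrableOn_Ioc_of_le zero_le_one).1 hF)]
    at hF0
  filter_upwards [hF0] with t ht
  exact (integral_eq_zero_iff_of_nonneg (fun w => hf (w, t))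
    (f.integrable_comp_prodMk _ t)).1 ht

theorem TendstoYoung.intervalIntegral_eq_sub (h : TendstoYoung νn ν) (φ : E →ᵇ ℝ)
    {f : ℝ → ℝ} {fn : ℕ → ℝ → ℝ} (hfn : ∀ n, AbsolutelyContinuousOnInterval (fn n) 0 1)
    (hderiv : ∀ n, ∀ᵐ t ∂volume.restrict (Icc (0:ℝ) 1), HasDerivAt (fn n) (∫ w, φ w ∂νn n t) t)
    (hconv : ∀ t ∈ Icc (0:ℝ) 1, Tendsto (fun n => fn n t) atTop (𝓝 (f t))) :
    IntervalIntegrable (fun t => ∫ w, φ w ∂ν t) volume 0 1 ∧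
      ∀ t ∈ Icc (0:ℝ) 1, ∫ u in (0:ℝ)..t, ∫ w, φ w ∂ν u = f t - f 0 := by
  have h0 : (0:ℝ) ∈ Icc (0:ℝ) 1 := ⟨le_rfl, zero_le_one⟩
  have hFTC : ∀ n, ∀ t ∈ Icc (0:ℝ) 1, IntervalIntegrable (fun u => ∫ w, φ w ∂νn n u) volume 0 t ∧
      ∫ u in (0:ℝ)..t, ∫ w, φ w ∂νn n u = fn n t - fn n 0 := fun n t ht => by
    have hsub : uIcc 0 t ⊆ uIcc (0:ℝ) 1 := uIcc_subset_uIcc_left (by rwa [uIcc_of_le zero_le_one])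
    refine ((hfn n).mono hsub).integral_eq_sub_of_ae_hasDerivAt ?_
    filter_upwards [(ae_restrict_iff' measurableSet_Icc).1 (hderiv n)] with u hu hut
    exact hu (by simpa [uIcc_of_le zero_le_one] using hsub hut)
  have hint : IntervalIntegrable (fun t => ∫ w, φ w ∂ν t) volume 0 1 := by
    simpa using h.intervalIntegrable (φ.compContinuous ⟨Prod.fst, continuous_fst⟩)
      (Eventually.of_forall fun n => by simpa using (hFTC n 1 ⟨zero_le_one, le_rfl⟩).1)
  refine ⟨hint, fun t ht => tendsto_nhds_unique ?_
    (((hconv t ht).sub (hconv 0 h0)).congr fun n => (hFTC n t ht).2.symm)⟩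
  exact tendsto_intervalIntegral_of_tendsto_integral_mul ht hint
    (fun n => (hFTC n 1 ⟨zero_le_one, le_rfl⟩).1) (fun u => φ.norm_integral_le_norm (ν u))
    (fun n u => φ.norm_integral_le_norm (νn n u)) (h.tendsto_integral_mul · φ)

end Young

section Constraint

variable {X E : Type*} [PseudoMetricSpace X] [PseudoMetricSpace E] [MeasurableSpace E]
  [OpensMeasurableSpace E] {νn : ℕ → ℝ → Measure E} {ν : ℝ → Measure E}
  [∀ t, IsProbabilityMeasure (ν t)] [∀ n t, IsProbabilityMeasure (νn n t)]

theorem TendstoYoung.ae_ae_infDist_le (h : TendstoYoung νn ν) {C : Set (X × E)} {γ : ℝ → X}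
    {γn : ℕ → ℝ → X} (hγ : ContinuousOn γ (Icc 0 1)) (hγn : TendstoUniformlyOn γn γ atTop (Icc 0 1))
    (hmem : ∀ n, ∀ᵐ t ∂volume.restrict (Icc (0:ℝ) 1), ∀ᵐ w ∂νn n t, (γn n t, w) ∈ C)
    {ε : ℝ} (hε : 0 < ε) :
    ∀ᵐ t ∂volume.restrict (Icc (0:ℝ) 1), ∀ᵐ w ∂ν t, Metric.infDist (γ t, w) C ≤ ε := by
  set γ' : ℝ → X := IccExtend zero_le_one ((Icc 0 1).domRestrict γ)
  have hγ' : Continuous γ' := (continuousOn_iff_continuous_domRestrict.1 hγ).Icc_extend'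
  have hγ'γ : ∀ t ∈ Icc (0:ℝ) 1, γ' t = γ t := fun t ht => IccExtend_of_mem _ _ ht
  have hcont : Continuous fun p : E × ℝ => min 1 (max 0 (Metric.infDist (γ' p.2, p.1) C - ε)) :=
    continuous_const.min (continuous_const.max
      (((Metric.continuous_infDist_pt C).comp ((hγ'.comp continuous_snd).prodMk
        continuous_fst)).sub continuous_const))
  let f : E × ℝ →ᵇ ℝ := .ofNormedAddCommGroup _ hcont 1 fun p => by
    rw [Real.norm_eq_abs, abs_le]
    constructor <;> linarith [min_le_left 1 (max 0 (Metric.infDist (γ' p.2, p.1) C - ε)),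
      le_min zero_le_one (le_max_left 0 (Metric.infDist (γ' p.2, p.1) C - ε))]
  have hf0 : 0 ≤ f := fun p => le_min zero_le_one (le_max_left _ _)
  have hfn : ∀ᶠ n in atTop, ∀ᵐ t ∂volume.restrict (Icc (0:ℝ) 1), ∀ᵐ w ∂νn n t,
      f (w, t) = 0 := by
    filter_upwards [Metric.tendstoUniformlyOn_iff.1 hγn ε hε] with n hn
    filter_upwards [hmem n, ae_restrict_mem measurableSet_Icc] with t ht htI
    filter_upwards [ht] with w hw
    have : Metric.infDist (γ' t, w) C ≤ ε :=
      calc Metric.infDist (γ' t, w) C ≤ dist (γ' t, w) (γn n t, w) :=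
            Metric.infDist_le_dist_of_mem hw
        _ ≤ ε := by simp [Prod.dist_eq, hγ'γ t htI, (hn t htI).le]
    simp [f, this]
  filter_upwards [h.ae_ae_eq_zero f hf0 hfn, ae_restrict_mem measurableSet_Icc] with t ht htI
  filter_upwards [ht] with w hw
  have hw' : min 1 (max 0 (Metric.infDist (γ' t, w) C - ε)) = 0 := hw
  rw [hγ'γ t htI] at hw'
  have := le_max_right 0 (Metric.infDist (γ t, w) C - ε)
  rcases min_eq_iff.1 hw' with h1 | h1 <;> linarith [h1.1]

theorem TendstoYoung.ae_ae_mem_of_tendstoUniformlyOn (h : TendstoYoung νn ν)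
    {C : Set (X × E)} (hC : IsClosed C) {γ : ℝ → X} {γn : ℕ → ℝ → X}
    (hγ : ContinuousOn γ (Icc 0 1)) (hγn : TendstoUniformlyOn γn γ atTop (Icc 0 1))
    (hmem : ∀ n, ∀ᵐ t ∂volume.restrict (Icc (0:ℝ) 1), ∀ᵐ w ∂νn n t, (γn n t, w) ∈ C) :
    ∀ᵐ t ∂volume.restrict (Icc (0:ℝ) 1), ∀ᵐ w ∂ν t, (γ t, w) ∈ C := by
  rcases C.eq_empty_or_nonempty with rfl | hCne
  · filter_upwards [hmem 0] with t ht
    exact ht.exists.elim fun _ hw => hw.elim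
  filter_upwards [ae_all_iff.2 fun j : ℕ =>
    h.ae_ae_infDist_le hγ hγn hmem (Nat.one_div_pos_of_nat (n := j))] with t ht
  filter_upwards [ae_all_iff.2 ht] with w hw
  rw [hC.mem_iff_infDist_zero hCne]
  exact le_antisymm (ge_of_tendsto' tendsto_one_div_add_atTop_nhds_zero_nat hw)
    Metric.infDist_nonneg

end Constraint

section Euclidean

variable {ι : Type*} [Fintype ι]

def clampCoord (R : ℝ) (i : ι) : EuclideanSpace ℝ ι →ᵇ ℝ :=
  .ofNormedAddCommGroup (fun w => max (-R) (min R (w i))) (by fun_prop) |R| fun w => by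
    rw [Real.norm_eq_abs, abs_le]
    exact ⟨(neg_le_neg (le_abs_self R)).trans (le_max_left _ _),
      max_le (neg_le_abs R) ((min_le_left _ _).trans (le_abs_self R))⟩

lemma integral_clampCoord {μ : Measure (EuclideanSpace ℝ ι)} [IsFiniteMeasure μ] {R : ℝ}
    (hμ : ∀ᵐ w ∂μ, w ∈ Metric.closedBall 0 R) (i : ι) :
    ∫ w, clampCoord R i w ∂μ = (∫ w, w ∂μ) i := by
  have hint : Integrable (fun w : EuclideanSpace ℝ ι => w) μ :=
    (integrable_const R).mono' aestronglyMeasurable_id (hμ.mono fun w hw => by simpa using hw)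
  rw [eval_integral_piLp hint.eval_piLp i]
  refine integral_congr_ae (hμ.mono fun w hw => ?_)
  have hwi : |w i| ≤ R := (PiLp.norm_apply_le w i).trans (by simpa using hw)
  simp [clampCoord, (abs_le.1 hwi).1, (abs_le.1 hwi).2]

variable {νn : ℕ → ℝ → Measure (EuclideanSpace ℝ ι)} {ν : ℝ → Measure (EuclideanSpace ℝ ι)}
  [∀ t, IsProbabilityMeasure (ν t)] [∀ n t, IsProbabilityMeasure (νn n t)]

theorem TendstoYoung.eq_add_integral_barycenter (h : TendstoYoung νn ν)
    {σ : ℝ → EuclideanSpace ℝ ι} {σn : ℕ → ℝ → EuclideanSpace ℝ ι} {K : NNReal} {R : ℝ}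
    (hσn : ∀ n, LipschitzOnWith K (σn n) (Icc 0 1))
    (hconv : ∀ t ∈ Icc (0:ℝ) 1, Tendsto (fun n => σn n t) atTop (𝓝 (σ t)))
    (hsuppn : ∀ n, ∀ᵐ t ∂volume.restrict (Icc (0:ℝ) 1), ∀ᵐ w ∂νn n t, w ∈ Metric.closedBall 0 R)
    (hsupp : ∀ᵐ t ∂volume.restrict (Icc (0:ℝ) 1), ∀ᵐ w ∂ν t, w ∈ Metric.closedBall 0 R)
    (hvel : ∀ n, ∀ᵐ t ∂volume.restrict (Icc (0:ℝ) 1), HasDerivAt (σn n) (∫ w, w ∂νn n t) t) :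
    IntervalIntegrable (fun t => ∫ w, w ∂ν t) volume 0 1 ∧
      ∀ t ∈ Icc (0:ℝ) 1, σ t = σ 0 + ∫ u in (0:ℝ)..t, ∫ w, w ∂ν u := by
  have hcoord (i : ι) := h.intervalIntegral_eq_sub (clampCoord R i)
    (fn := fun n x => σn n x i) (f := fun x => σ x i)
    (fun n => LipschitzOnWith.absolutelyContinuousOnInterval (by
      rw [uIcc_of_le zero_le_one]
      exact (PiLp.proj (𝕜 := ℝ) 2 (fun _ : ι => ℝ) i).lipschitz.comp_lipschitzOnWith (hσn n)))
    (fun n => by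
      filter_upwards [hvel n, hsuppn n] with t ht hts
      rw [integral_clampCoord hts]
      exact (PiLp.proj (𝕜 := ℝ) 2 (fun _ : ι => ℝ) i).hasFDerivAt.comp_hasDerivAt t ht)
    (fun t ht => ((PiLp.proj (𝕜 := ℝ) 2 (fun _ : ι => ℝ) i).continuous.tendsto _).comp
      (hconv t ht))
  have hcoe (i : ι) : ∀ᵐ t ∂volume.restrict (Icc (0:ℝ) 1),
      (∫ w, w ∂ν t) i = ∫ w, clampCoord R i w ∂ν t := by
    filter_upwards [hsupp] with t ht using (integral_clampCoord ht i).symm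
  have hB : IntervalIntegrable (fun t => ∫ w, w ∂ν t) volume 0 1 := by
    rw [intervalIntegrable_iff_integrableOn_Ioc_of_le zero_le_one]
    refine integrable_piLp_iff.2 fun i => ?_
    refine ((intervalIntegrable_iff_integrableOn_Ioc_of_le zero_le_one).1 (hcoord i).1).congr ?_
    exact (ae_restrict_of_ae_restrict_of_subset Ioc_subset_Icc_self (hcoe i)).mono
      fun t ht => ht.symm
  refine ⟨hB, fun t ht => ?_⟩
  have hsub : uIoc 0 t ⊆ Icc (0:ℝ) 1 := by
    rw [uIoc_of_le ht.1]; exact Ioc_subset_Icc_self.trans (Icc_subset_Icc_right ht.2)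
  ext i
  have hcomm : (∫ u in (0:ℝ)..t, ∫ w, w ∂ν u) i = ∫ u in (0:ℝ)..t, (∫ w, w ∂ν u) i :=
    ((PiLp.proj (𝕜 := ℝ) 2 (fun _ : ι => ℝ) i).intervalIntegral_comp_comm
      (hB.mono_set (uIcc_subset_uIcc_left (by rwa [uIcc_of_le zero_le_one])))).symm
  rw [PiLp.add_apply, hcomm,
    intervalIntegral.integral_congr_ae (g := fun u => ∫ w, clampCoord R i w ∂ν u)
      ((ae_restrict_iff' measurableSet_Icc).1 (hcoe i) |>.mono fun u hu hu' => hu (hsub hu')),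
    (hcoord i).2 t ht]
  ring

end Euclidean

theorem stmt_19_general (d N : ℕ)
    (v : Fin N → EuclideanSpace ℝ (Fin d) → EuclideanSpace ℝ (Fin d))
    (hv_cont : ∀ k, Continuous (v k)) (hv_unit : ∀ k x, ‖v k x‖ = 1)
    (K K' : ℝ)
    (σ : ℝ → EuclideanSpace ℝ (Fin d)) (σn : ℕ → ℝ → EuclideanSpace ℝ (Fin d))
    (hσnLip : ∀ n, LipschitzOnWith (Real.toNNReal K) (σn n) (Set.Icc 0 1))
    (ν : ℝ → Measure (EuclideanSpace ℝ (Fin d)))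
    (νn : ℕ → ℝ → Measure (EuclideanSpace ℝ (Fin d)))
    [∀ t, IsProbabilityMeasure (ν t)] [∀ n t, IsProbabilityMeasure (νn n t)]
    -- supports in the closed ball B_{K'}
    (hsupp : ∀ n, ∀ t ∈ Set.Icc (0:ℝ) 1,
      νn n t (Metric.closedBall (0 : EuclideanSpace ℝ (Fin d)) K')ᶜ = 0)
    -- velocity condition for σⁿ
    (hvel : ∀ n, ∀ᵐ t ∂(volume.restrict (Set.Icc (0:ℝ) 1)),
      HasDerivAt (σn n) (∫ w, w ∂(νn n t)) t)
    -- supports in the union of the rays ℝ₊ v_k(σⁿ(t))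
    (hray : ∀ n, ∀ᵐ t ∂(volume.restrict (Set.Icc (0:ℝ) 1)),
      νn n t {w : EuclideanSpace ℝ (Fin d) |
        ∃ k : Fin N, ∃ s : ℝ, 0 ≤ s ∧ w = s • v k (σn n t)}ᶜ = 0)
    -- uniform convergence of the curves
    (hσconv : TendstoUniformlyOn (fun n t => σn n t) σ atTop (Set.Icc 0 1))
    -- narrow convergence of ν_tⁿ ⊗ λ → ν_t ⊗ λ
    (hnarrow : ∀ f : BoundedContinuousFunction (EuclideanSpace ℝ (Fin d) × ℝ) ℝ,
      Tendsto (fun n => ∫ t in (0:ℝ)..1, ∫ w, f (w, t) ∂(νn n t)) atTop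
        (𝓝 (∫ t in (0:ℝ)..1, ∫ w, f (w, t) ∂(ν t)))) :
    (∀ᵐ t ∂(volume.restrict (Set.Icc (0:ℝ) 1)),
      HasDerivAt σ (∫ w, w ∂(ν t)) t) ∧
    (∀ᵐ t ∂(volume.restrict (Set.Icc (0:ℝ) 1)),
      ν t {w : EuclideanSpace ℝ (Fin d) |
        ∃ k : Fin N, ∃ s : ℝ, 0 ≤ s ∧ w = s • v k (σ t)}ᶜ = 0) := by
  have hY : TendstoYoung νn ν := hnarrow
  have hσ : ContinuousOn σ (Icc 0 1) :=
    hσconv.continuousOn (Eventually.of_forall fun n => (hσnLip n).continuousOn).frequently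
  have hsuppn (n : ℕ) : ∀ᵐ t ∂volume.restrict (Icc (0:ℝ) 1), ∀ᵐ w ∂νn n t,
      w ∈ Metric.closedBall 0 K' :=
    ae_restrict_of_forall_mem measurableSet_Icc fun t ht => mem_ae_iff.2 (hsupp n t ht)
  have hsupp_lim := hY.ae_ae_mem_of_tendstoUniformlyOn
    (C := {p : EuclideanSpace ℝ (Fin d) × _ | p.2 ∈ Metric.closedBall 0 K'})
    (Metric.isClosed_closedBall.preimage continuous_snd) hσ hσconv hsuppn
  obtain ⟨hB, hσB⟩ := hY.eq_add_integral_barycenter hσnLip (fun t ht => hσconv.tendsto_at ht)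
    hsuppn hsupp_lim hvel
  refine ⟨ae_hasDerivAt_of_eq_add_integral hB hσB, ?_⟩
  have hrays := hY.ae_ae_mem_of_tendstoUniformlyOn
    (isClosed_setOf_exists_nonneg_smul hv_cont hv_unit) hσ hσconv
    fun n => (hray n).mono fun t ht => ae_iff.2 ht
  exact hrays.mono fun t ht => ae_iff.1 ht

/-- closedness of the Young-measure constraint set: uniform limits of
`K`-Lipschitz curves with velocities `σ̇ⁿ(t) = ∫ v dν_tⁿ` and Young measures supported
on the rays `∪_k ℝ₊ v_k(σⁿ(t))` (and in a fixed ball) satisfy the same two conditions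
in the limit, under uniform convergence of `σⁿ` and narrow convergence of
`ν_tⁿ ⊗ λ → ν_t ⊗ λ`. -/
theorem stmt_19 (d N : ℕ)
    (v : Fin N → EuclideanSpace ℝ (Fin d) → EuclideanSpace ℝ (Fin d))
    (hv_cont : ∀ k, Continuous (v k)) (hv_unit : ∀ k x, ‖v k x‖ = 1)
    (K K' : ℝ) (hK : 0 < K) (hK' : 0 < K')
    (σ : ℝ → EuclideanSpace ℝ (Fin d)) (σn : ℕ → ℝ → EuclideanSpace ℝ (Fin d))
    (hσnLip : ∀ n, LipschitzOnWith (Real.toNNReal K) (σn n) (Set.Icc 0 1))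
    (ν : ℝ → Measure (EuclideanSpace ℝ (Fin d)))
    (νn : ℕ → ℝ → Measure (EuclideanSpace ℝ (Fin d)))
    [∀ t, IsProbabilityMeasure (ν t)] [∀ n t, IsProbabilityMeasure (νn n t)]
    -- supports in the closed ball B_{K'}
    (hsupp : ∀ n, ∀ t ∈ Set.Icc (0:ℝ) 1,
      νn n t (Metric.closedBall (0 : EuclideanSpace ℝ (Fin d)) K')ᶜ = 0)
    -- velocity condition for σⁿ
    (hvel : ∀ n, ∀ᵐ t ∂(volume.restrict (Set.Icc (0:ℝ) 1)),
      HasDerivAt (σn n) (∫ w, w ∂(νn n t)) t)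
    -- supports in the union of the rays ℝ₊ v_k(σⁿ(t))
    (hray : ∀ n, ∀ᵐ t ∂(volume.restrict (Set.Icc (0:ℝ) 1)),
      νn n t {w : EuclideanSpace ℝ (Fin d) |
        ∃ k : Fin N, ∃ s : ℝ, 0 ≤ s ∧ w = s • v k (σn n t)}ᶜ = 0)
    -- uniform convergence of the curves
    (hσconv : TendstoUniformlyOn (fun n t => σn n t) σ atTop (Set.Icc 0 1))
    -- narrow convergence of ν_tⁿ ⊗ λ → ν_t ⊗ λ
    (hnarrow : ∀ f : BoundedContinuousFunction (EuclideanSpace ℝ (Fin d) × ℝ) ℝ,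
      Tendsto (fun n => ∫ t in (0:ℝ)..1, ∫ w, f (w, t) ∂(νn n t)) atTop
        (𝓝 (∫ t in (0:ℝ)..1, ∫ w, f (w, t) ∂(ν t)))) :
    (∀ᵐ t ∂(volume.restrict (Set.Icc (0:ℝ) 1)),
      HasDerivAt σ (∫ w, w ∂(ν t)) t) ∧
    (∀ᵐ t ∂(volume.restrict (Set.Icc (0:ℝ) 1)),
      ν t {w : EuclideanSpace ℝ (Fin d) |
        ∃ k : Fin N, ∃ s : ℝ, 0 ≤ s ∧ w = s • v k (σ t)}ᶜ = 0) :=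
  stmt_19_general d N v hv_cont hv_unit K K' σ σn hσnLip ν νn hsupp hvel hray hσconv hnarrow
end
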